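/- Let n, m ≥ 1 and let H₀, H₁, …, H_m : ℝ^{2n+1} → ℝ be continuously differentiable functions of z = (x, p, u) ∈ ℝⁿ × ℝⁿ × ℝ such that each H_i (1 ≤ i ≤ m) is a first integral of the characteristic field Z₀(z) = T(p) ∇H₀(z), i.e. ⟨∇H_i(z), T(p) ∇H₀(z)⟩ = 0 for all z ∈ ℝ^{2n+1}. Set Z_i(z) = T(p) ∇H_i(z), and for each i let g_i : ℝ × ℝ^{2n+1} → ℝ^{2n+1} be a flow of Z_i (g_i(0, y) = y and ∂_t g_i(t, y) = Z_i(g_i(t, y))). Then for every z₀ ∈ ℝ^{2n+1}, the map ẑ(λ, z₀) = g₁(t₁, g₂(t₂, …, g_m(t_m, z₀)…)), λ = (t₁, …, t_m) ∈ ℝ^m, is a parameterized stationary solution of the first-order PDE H₀(z) = H₀(z₀): it satisfies ẑ(0, z₀) = z₀ and H₀(ẑ(λ, z₀)) = H₀(z₀) for all λ ∈ ℝ^m. -/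

import Mathlib

/-!
Each `Hᵢ` is a first integral of `Z₀ = T ∇H₀`, and `T(p)` is antisymmetric, so
`⟨∇H₀, T ∇Hᵢ⟩ = -⟨∇Hᵢ, T ∇H₀⟩ = 0`: conversely `H₀` is a first integral of every `Zᵢ`.
Hence `H₀` is constant along each flow `gᵢ`, and so along their composition `ẑ`.
-/

open Matrix

/-- Index type for `ℝ^{2n+1} ≅ ℝⁿ × ℝⁿ × ℝ`: the first `Fin n` indexes the
`x`-block, the second `Fin n` indexes the `p`-block and `Unit` indexes `u`. -/
abbrev Idx (n : ℕ) := Fin n ⊕ (Fin n ⊕ Unit)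

/-- The `(2n+1) × (2n+1)` matrix `T(p)` with block form
`[[0ₙ, Iₙ, 0], [−Iₙ, 0ₙ, −p], [0ᵀ, pᵀ, 0]]`. -/
def Tmat (n : ℕ) (p : Fin n → ℝ) : Matrix (Idx n) (Idx n) ℝ :=
  fun i j =>
    match i, j with
    | Sum.inl a, Sum.inr (Sum.inl b) => if a = b then 1 else 0
    | Sum.inr (Sum.inl a), Sum.inl b => if a = b then -1 else 0
    | Sum.inr (Sum.inl a), Sum.inr (Sum.inr _) => -p a
    | Sum.inr (Sum.inr _), Sum.inr (Sum.inl b) => p b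
    | _, _ => 0

/-- The full gradient `∇H(z)` of a scalar function on a finite-dimensional
coordinate space, given componentwise by directional derivatives along the
standard basis. -/
noncomputable def grad {ι : Type*} [Fintype ι] [DecidableEq ι]
    (H : (ι → ℝ) → ℝ) (z : ι → ℝ) : ι → ℝ :=
  fun i => fderiv ℝ H z (Pi.single i 1)

/-- The `p`-component of `z = (x, p, u) ∈ ℝ^{2n+1}`. -/
def pcomp {n : ℕ} (z : Idx n → ℝ) : Fin n → ℝ := fun a => z (Sum.inr (Sum.inl a))

/-- The composed orbit `ẑ(λ, z₀) = g₁(t₁, g₂(t₂, …, g_m(t_m, z₀)…))` of the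
flows `g₁, …, g_m` starting from `z₀`, where `λ = (t₁, …, t_m)`. -/
def orbit {V : Type*} {m : ℕ} (g : Fin m → ℝ → V → V)
    (l : Fin m → ℝ) (z₀ : V) : V :=
  (List.ofFn fun i : Fin m => g i (l i)).foldr (fun φ z => φ z) z₀

lemma fderiv_apply_eq_dotProduct_grad {ι : Type*} [Fintype ι] [DecidableEq ι]
    (H : (ι → ℝ) → ℝ) (z v : ι → ℝ) :
    fderiv ℝ H z v = v ⬝ᵥ grad H z := by
  conv_lhs => rw [pi_eq_sum_univ' v]
  simp only [map_sum, map_smul, smul_eq_mul, dotProduct, grad]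

lemma dotProduct_mulVec_of_transpose_eq_neg {ι : Type*} [Fintype ι]
    {A : Matrix ι ι ℝ} (hA : Aᵀ = -A) (u w : ι → ℝ) :
    u ⬝ᵥ A *ᵥ w = -(w ⬝ᵥ A *ᵥ u) := by
  rw [dotProduct_mulVec, ← mulVec_transpose, hA, neg_mulVec, neg_dotProduct, dotProduct_comm]

lemma Tmat_transpose (n : ℕ) (p : Fin n → ℝ) : (Tmat n p)ᵀ = -Tmat n p := by
  ext i j
  rcases i with a | a | a <;> rcases j with b | b | b <;>
    simp [Tmat, transpose_apply, eq_comm]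
  all_goals split <;> simp

lemma fderiv_apply_Tmat_mulVec_grad_eq_zero {n : ℕ} {F G : (Idx n → ℝ) → ℝ}
    {p : Fin n → ℝ} {z : Idx n → ℝ} (h : grad G z ⬝ᵥ Tmat n p *ᵥ grad F z = 0) :
    fderiv ℝ F z (Tmat n p *ᵥ grad G z) = 0 := by
  rw [fderiv_apply_eq_dotProduct_grad, dotProduct_comm,
    dotProduct_mulVec_of_transpose_eq_neg (Tmat_transpose n p), h, neg_zero]

theorem apply_eq_of_hasDerivAt_of_fderiv_apply_eq_zero {E : Type*}
    [NormedAddCommGroup E] [NormedSpace ℝ E] {F : E → ℝ} (hF : Differentiable ℝ F)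
    {Z : E → E} (hZ : ∀ z, fderiv ℝ F z (Z z) = 0)
    {γ : ℝ → E} (hγ : ∀ t, HasDerivAt γ (Z (γ t)) t) (s t : ℝ) :
    F (γ s) = F (γ t) := by
  have hFγ : ∀ t, HasDerivAt (F ∘ γ) 0 t := fun t => by
    simpa only [hZ] using (hF (γ t)).hasFDerivAt.comp_hasDerivAt t (hγ t)
  exact is_const_of_deriv_eq_zero (fun t => (hFγ t).differentiableAt)
    (fun t => (hFγ t).deriv) s t

section Orbit

variable {V : Type*}

lemma orbit_succ {m : ℕ} (g : Fin (m + 1) → ℝ → V → V) (l : Fin (m + 1) → ℝ) (z₀ : V) :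
    orbit g l z₀ = g 0 (l 0) (orbit (fun i => g i.succ) (fun i => l i.succ) z₀) := by
  simp [orbit, List.ofFn_succ]

lemma orbit_zero {m : ℕ} {g : Fin m → ℝ → V → V} (hg : ∀ i y, g i 0 y = y) (z₀ : V) :
    orbit g (fun _ => 0) z₀ = z₀ := by
  induction m with
  | zero => rfl
  | succ m ih => rw [orbit_succ, ih fun i => hg i.succ, hg]

lemma apply_orbit_eq {α : Type*} (F : V → α) {m : ℕ} {g : Fin m → ℝ → V → V}
    (hg : ∀ i t y, F (g i t y) = F y) (l : Fin m → ℝ) (z₀ : V) :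
    F (orbit g l z₀) = F z₀ := by
  induction m with
  | zero => rfl
  | succ m ih => rw [orbit_succ, hg, ih fun i => hg i.succ]

end Orbit

theorem parameterized_stationary_solution_general
    (n m : ℕ)
    (H₀ : (Idx n → ℝ) → ℝ) (hH₀ : ContDiff ℝ 1 H₀)
    (H : Fin m → (Idx n → ℝ) → ℝ)
    (hint : ∀ i (z : Idx n → ℝ),
      grad (H i) z ⬝ᵥ (Tmat n (pcomp z)) *ᵥ grad H₀ z = 0)
    (g : Fin m → ℝ → (Idx n → ℝ) → Idx n → ℝ)
    (hg0 : ∀ i y, g i 0 y = y)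
    (hgflow : ∀ i t y,
      HasDerivAt (fun s => g i s y)
        ((Tmat n (pcomp (g i t y))) *ᵥ grad (H i) (g i t y)) t)
    (z₀ : Idx n → ℝ) :
    orbit g (fun _ => 0) z₀ = z₀
      ∧ ∀ l : Fin m → ℝ, H₀ (orbit g l z₀) = H₀ z₀ := by
  have hflow : ∀ i t y, H₀ (g i t y) = H₀ y := fun i t y => by
    simpa only [hg0] using apply_eq_of_hasDerivAt_of_fderiv_apply_eq_zero
      (hH₀.differentiable one_ne_zero)
      (fun z => fderiv_apply_Tmat_mulVec_grad_eq_zero (hint i z)) (hgflow i · y) t 0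
  exact ⟨orbit_zero hg0 z₀, fun l => apply_orbit_eq H₀ hflow l z₀⟩

/-- let `H₀, H₁, …, H_m : ℝ^{2n+1} → ℝ` be continuously
differentiable functions of `z = (x, p, u)` with each `Hᵢ` (`1 ≤ i ≤ m`) a
first integral of the characteristic field `Z₀(z) = T(p) ∇H₀(z)`, i.e.
`⟨∇Hᵢ(z), T(p) ∇H₀(z)⟩ = 0` for all `z`. Set `Zᵢ(z) = T(p) ∇Hᵢ(z)` and let
`gᵢ` be a flow of `Zᵢ`. Then for every `z₀ ∈ ℝ^{2n+1}` the map
`ẑ(λ, z₀) = g₁(t₁, g₂(t₂, …, g_m(t_m, z₀)…))`, `λ = (t₁, …, t_m) ∈ ℝ^m`, is a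
parameterized stationary solution of the first-order PDE `H₀(z) = H₀(z₀)`:
it satisfies `ẑ(0, z₀) = z₀` and `H₀(ẑ(λ, z₀)) = H₀(z₀)` for all `λ ∈ ℝ^m`. -/
theorem parameterized_stationary_solution
    (n m : ℕ) (hn : 1 ≤ n) (hm : 1 ≤ m)
    (H₀ : (Idx n → ℝ) → ℝ) (hH₀ : ContDiff ℝ 1 H₀)
    (H : Fin m → (Idx n → ℝ) → ℝ) (hH : ∀ i, ContDiff ℝ 1 (H i))
    (hint : ∀ i (z : Idx n → ℝ),
      grad (H i) z ⬝ᵥ (Tmat n (pcomp z)) *ᵥ grad H₀ z = 0)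
    (g : Fin m → ℝ → (Idx n → ℝ) → Idx n → ℝ)
    (hg0 : ∀ i y, g i 0 y = y)
    (hgflow : ∀ i t y,
      HasDerivAt (fun s => g i s y)
        ((Tmat n (pcomp (g i t y))) *ᵥ grad (H i) (g i t y)) t)
    (z₀ : Idx n → ℝ) :
    orbit g (fun _ => 0) z₀ = z₀
      ∧ ∀ l : Fin m → ℝ, H₀ (orbit g l z₀) = H₀ z₀ :=
  parameterized_stationary_solution_general n m H₀ hH₀ H hint g hg0 hgflow z₀
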